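/- arXiv:2104.04376 — 5 statements merged into one kernel-verified Lean document; each statement's English description precedes it below -/
import Mathlib

section
/- If ω₀ > 0 and 0 ≤ α ≤ √2, then every eigenvalue λ of the complex matrix A = ω₀·[[-1,0,0,-α⁴],[1,-1,0,0],[0,1,-1,0],[0,0,1,-1]] satisfies Re(λ) ≤ 0. -/
/-!
Expanding along the first row, the characteristic polynomial of `A` is
`(λ + ω₀)⁴ + (ω₀ α)⁴`, so `z = λ + ω₀` satisfies `z⁴ = -(ω₀ α)⁴`. Then `z²` is `±i (ω₀ α)²`,
which forces `|Re z| = |Im z|` and `2 (Re z)² = (ω₀ α)² ≤ 2 ω₀²`; hence `Re z ≤ ω₀`.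
-/

open Matrix

theorem Matrix.det_fin_four_cyclic {R : Type*} [CommRing R] (p q r : R) :
    !![p, 0, 0, q; r, p, 0, 0; 0, r, p, 0; 0, 0, r, p].det = p ^ 4 - q * r ^ 3 := by
  simp [det_succ_row_zero, Fin.sum_univ_succ, Fin.succAbove]
  ring

theorem mem_spectrum_smul_cyclic_iff {K : Type*} [Field K] (ω c lam : K) :
    lam ∈ spectrum K (ω • !![(-1 : K), 0, 0, -c; 1, -1, 0, 0; 0, 1, -1, 0; 0, 0, 1, -1]) ↔
      (lam + ω) ^ 4 + ω ^ 4 * c = 0 := by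
  have hcharmatrix : scalar (Fin 4) lam
      - ω • !![(-1 : K), 0, 0, -c; 1, -1, 0, 0; 0, 1, -1, 0; 0, 0, 1, -1] =
      !![lam + ω, 0, 0, ω * c; -ω, lam + ω, 0, 0; 0, -ω, lam + ω, 0; 0, 0, -ω, lam + ω] := by
    ext i j
    fin_cases i <;> fin_cases j <;> simp
  rw [mem_spectrum_iff_isRoot_charpoly, Polynomial.IsRoot, eval_charpoly, hcharmatrix,
    det_fin_four_cyclic]
  ring_nf

theorem Complex.eq_mul_I_or_eq_neg_of_sq_eq_neg_sq {z : ℂ} {s : ℝ} (h : z ^ 2 = -(s : ℂ) ^ 2) :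
    z = s * I ∨ z = -(s * I) :=
  sq_eq_sq_iff_eq_or_eq_neg.mp (by rw [h, mul_pow, I_sq]; ring)

theorem Complex.two_mul_re_sq_of_pow_four_eq_neg {z : ℂ} {r : ℝ} (h : z ^ 4 = -(r : ℂ) ^ 4) :
    2 * z.re ^ 2 = r ^ 2 := by
  have hsq : (z ^ 2) ^ 2 = -((r ^ 2 : ℝ) : ℂ) ^ 2 := by push_cast; rw [← pow_mul, h]; ring
  have hparts : z.re ^ 2 - z.im ^ 2 = 0 ∧ (2 * z.re * z.im) ^ 2 = (r ^ 2) ^ 2 := by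
    rcases eq_mul_I_or_eq_neg_of_sq_eq_neg_sq hsq with h2 | h2 <;>
    · have hre := congrArg re h2
      have him := congrArg im h2
      simp only [sq, mul_re, mul_im, neg_re, neg_im, ofReal_re, ofReal_im, I_re, I_im] at hre him
      constructor <;> nlinarith
  nlinarith [sq_nonneg z.re, sq_nonneg r]

theorem moog_eigenvalues_re_nonpos (ω₀ α : ℝ) (hω : 0 < ω₀)
    (hα : 0 ≤ α) (hα2 : α ≤ Real.sqrt 2) (lam : ℂ)
    (hlam : lam ∈ spectrum ℂ
      ((ω₀ : ℂ) • !![(-1 : ℂ), 0, 0, -(α : ℂ)^4;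
                     1, -1, 0, 0;
                     0, 1, -1, 0;
                     0, 0, 1, -1])) :
    lam.re ≤ 0 := by
  have hpow : (lam + ω₀) ^ 4 = -((ω₀ * α : ℝ) : ℂ) ^ 4 := by
    rw [mem_spectrum_smul_cyclic_iff] at hlam
    push_cast
    linear_combination hlam
  have hre := Complex.two_mul_re_sq_of_pow_four_eq_neg hpow
  have hα_sq : α ^ 2 ≤ 2 := by
    simpa using pow_le_pow_left₀ hα hα2 2
  have hshift : ((lam : ℂ) + ω₀).re ≤ ω₀ := by
    refine (abs_le_of_sq_le_sq ?_ hω.le).trans' (le_abs_self _)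
    nlinarith [sq_nonneg ω₀]
  simpa using hshift
end

section
/- If ω₀ > 0 and 0 ≤ α < √2, then every eigenvalue λ of the complex matrix A = ω₀·[[-1,0,0,-α⁴],[1,-1,0,0],[0,1,-1,0],[0,0,1,-1]] satisfies Re(λ) < 0. -/
/-!
Writing `z = λ + ω₀`, the characteristic polynomial shows `z⁴ = -(ω₀ α)⁴`. A fourth power is a
nonpositive real only when `z` lies on one of the diagonals `Im z = ±Re z` (or on the imaginary
axis), so `4 (Re z)⁴ ≤ (ω₀ α)⁴ < 4 ω₀⁴` because `α⁴ < 4`, whence `Re z < ω₀`.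
-/

open Matrix

theorem Matrix.eval_charpoly_fin_four_cyclic {R : Type*} [CommRing R] (d a b t : R) :
    (!![d, 0, 0, a; b, d, 0, 0; 0, b, d, 0; 0, 0, b, d]).charpoly.eval t =
      (t - d) ^ 4 - a * b ^ 3 := by
  rw [eval_charpoly, det_succ_row_zero]
  simp [Fin.sum_univ_succ, det_fin_three, Fin.succAbove]
  ring

theorem Complex.four_mul_re_pow_four_le {z : ℂ} {t : ℝ} (ht : 0 ≤ t) (hz : z ^ 4 = -t) :
    4 * z.re ^ 4 ≤ t := by
  have hre := congrArg re hz
  have him := congrArg im hz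
  simp only [pow_succ, pow_zero, one_mul, mul_re, mul_im, neg_re, neg_im, ofReal_re,
    ofReal_im] at hre him
  have hfac : z.re * z.im * (z.re - z.im) * (z.re + z.im) = 0 := by
    linear_combination him / 4
  obtain ((hx | hy) | hdiag) | hantidiag := by simpa only [mul_eq_zero] using hfac
  · rw [hx]
    linarith
  · rw [hy] at hre
    nlinarith [pow_two_nonneg (z.re ^ 2)]
  · rw [show z.im = z.re by linarith] at hre
    linarith
  · rw [show z.im = -z.re by linarith] at hre
    linarith

theorem moog_eigenvalues_re_neg (ω₀ α : ℝ) (hω : 0 < ω₀)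
    (hα : 0 ≤ α) (hα2 : α < Real.sqrt 2) (lam : ℂ)
    (hlam : lam ∈ spectrum ℂ
      ((ω₀ : ℂ) • !![(-1 : ℂ), 0, 0, -(α : ℂ)^4;
                     1, -1, 0, 0;
                     0, 1, -1, 0;
                     0, 0, 1, -1])) :
    lam.re < 0 := by
  simp only [smul_of, smul_cons, smul_empty, smul_eq_mul, mul_neg, mul_one, mul_zero] at hlam
  have hchar := (mem_spectrum_iff_isRoot_charpoly.mp hlam).eq_zero
  rw [eval_charpoly_fin_four_cyclic] at hchar
  have hz : (lam + ω₀) ^ 4 = -((ω₀ * α) ^ 4 : ℝ) := by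
    push_cast
    linear_combination hchar
  have hre : 4 * (lam.re + ω₀) ^ 4 ≤ (ω₀ * α) ^ 4 := by
    simpa using Complex.four_mul_re_pow_four_le (by positivity) hz
  have hα4 : α ^ 4 < 4 := by
    have := (Real.lt_sqrt hα).mp hα2
    nlinarith
  have hlt : (lam.re + ω₀) ^ 4 < ω₀ ^ 4 := by
    nlinarith [pow_pos hω 4]
  linarith [lt_of_pow_lt_pow_left₀ 4 hω.le hlt]
end

section
/- Let A_s = (1/2)(A + Aᵀ) with A = ω₀·[[-1,0,0,-α⁴],[1,-1,0,0],[0,1,-1,0],[0,0,1,-1]], ω₀ > 0, and α⁴ = 4r with 0 ≤ r. Then A_s is negative definite if and only if 0 ≤ r < 5/12. -/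
open Matrix

/-! The symmetric part of a matrix has the same quadratic form as the matrix itself, so the claim
is that `Q(x) = x₀² + x₁² + x₂² + x₃² - x₀x₁ - x₁x₂ - x₂x₃ + 4r x₀x₃` is positive definite exactly
when `r < 5/12`. Completing squares (an `LDLᵀ` factorisation) writes `Q` as three squares plus
`(5 - 12r)(1 + 4r)/8 · x₃²`, which is positive definite for `-1/4 < r < 5/12`; conversely
`Q(3, 1, -1, -3) = 15 - 36r ≤ 0` once `r ≥ 5/12`. -/

theorem dotProduct_half_smul_add_transpose_mulVec {n K : Type*} [Fintype n] [Field K]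
    [NeZero (2 : K)] (M : Matrix n n K) (x : n → K) :
    x ⬝ᵥ (((1 : K) / 2) • (M + Mᵀ)) *ᵥ x = x ⬝ᵥ M *ᵥ x := by
  rw [smul_mulVec, add_mulVec, dotProduct_smul, dotProduct_add, dotProduct_transpose_mulVec,
    smul_eq_mul, ← two_mul, ← mul_assoc, one_div_mul_cancel two_ne_zero, one_mul]

def moogForm (r : ℝ) (x : Fin 4 → ℝ) : ℝ :=
  x 0 ^ 2 + x 1 ^ 2 + x 2 ^ 2 + x 3 ^ 2 - x 0 * x 1 - x 1 * x 2 - x 2 * x 3 + 4 * r * x 0 * x 3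

theorem dotProduct_moog_mulVec (r : ℝ) (x : Fin 4 → ℝ) :
    x ⬝ᵥ !![(-1 : ℝ), 0, 0, -(4*r);
            1, -1, 0, 0;
            0, 1, -1, 0;
            0, 0, 1, -1] *ᵥ x = -moogForm r x := by
  simp only [dotProduct, mulVec, of_apply, cons_val', cons_val_fin_one, Fin.sum_univ_four,
    cons_val_zero, cons_val_one, cons_val, moogForm]
  ring

theorem moogForm_eq_sum_sq (r : ℝ) (x : Fin 4 → ℝ) :
    moogForm r x = (2 * x 0 - x 1 + 4 * r * x 3) ^ 2 / 4 + (3 * x 1 - 2 * x 2 + 4 * r * x 3) ^ 2 / 12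
      + (4 * x 2 + (4 * r - 3) * x 3) ^ 2 / 24 + (5 - 12 * r) * (1 + 4 * r) / 8 * x 3 ^ 2 := by
  unfold moogForm
  ring

theorem moogForm_pos {r : ℝ} (hr : -1 / 4 < r) (hr' : r < 5 / 12) {x : Fin 4 → ℝ}
    (hx : x ≠ 0) : 0 < moogForm r x := by
  have hc : 0 < (5 - 12 * r) * (1 + 4 * r) / 8 := by
    have : 0 < 5 - 12 * r := by linarith
    have : 0 < 1 + 4 * r := by linarith
    positivity
  rw [moogForm_eq_sum_sq]
  by_contra! hle
  have h3 : x 3 = 0 := sq_eq_zero_iff.mp <| by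
    nlinarith [sq_nonneg (2 * x 0 - x 1 + 4 * r * x 3),
      sq_nonneg (3 * x 1 - 2 * x 2 + 4 * r * x 3), sq_nonneg (4 * x 2 + (4 * r - 3) * x 3)]
  simp only [h3, mul_zero, add_zero, zero_pow two_ne_zero] at hle
  have h2 : x 2 = 0 := sq_eq_zero_iff.mp <| by
    nlinarith [sq_nonneg (2 * x 0 - x 1), sq_nonneg (3 * x 1 - 2 * x 2)]
  have h1 : x 1 = 0 := sq_eq_zero_iff.mp <| by nlinarith [sq_nonneg (2 * x 0 - x 1)]
  rw [h1, h2] at hle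
  have h0 : x 0 = 0 := sq_eq_zero_iff.mp <| by nlinarith
  exact hx (by ext i; fin_cases i <;> assumption)

theorem moogForm_witness (r : ℝ) : moogForm r ![3, 1, -1, -3] = 15 - 36 * r := by
  simp only [moogForm, cons_val_zero, cons_val_one, cons_val]
  ring

theorem moogForm_pos_iff {r : ℝ} (hr : -1 / 4 < r) : (∀ x ≠ 0, 0 < moogForm r x) ↔ r < 5 / 12 := by
  refine ⟨fun h => ?_, fun hr' x hx => moogForm_pos hr hr' hx⟩
  have := h ![3, 1, -1, -3] (by simp)
  rw [moogForm_witness] at this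
  linarith

theorem moog_symmetric_part_negdef_iff (ω₀ r : ℝ) (hω : 0 < ω₀) (hr : 0 ≤ r) :
    (∀ x : Fin 4 → ℝ, x ≠ 0 →
      x ⬝ᵥ ((((1:ℝ)/2) • (ω₀ • !![(-1 : ℝ), 0, 0, -(4*r);
                                   1, -1, 0, 0;
                                   0, 1, -1, 0;
                                   0, 0, 1, -1]
          + (ω₀ • !![(-1 : ℝ), 0, 0, -(4*r);
                     1, -1, 0, 0;
                     0, 1, -1, 0;
                     0, 0, 1, -1])ᵀ)) *ᵥ x) < 0)
    ↔ r < 5/12 := by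
  simp_rw [dotProduct_half_smul_add_transpose_mulVec, smul_mulVec, dotProduct_smul,
    dotProduct_moog_mulVec, smul_eq_mul, mul_neg, neg_lt_zero, mul_pos_iff_of_pos_left hω]
  exact moogForm_pos_iff (by linarith)
end

section
/- For the linearized system ẋ = Ax with A = ω₀·[[-1,0,0,-α⁴],[1,-1,0,0],[0,1,-1,0],[0,0,1,-1]], ω₀ > 0, 0 < α < √2, and D = diag(1, α, α², α³), the function V(x) = (1/2)xᵀD²x satisfies V(x) > 0 for x ≠ 0 and d/dt V(x(t)) < 0 whenever x(t) ≠ 0, for any differentiable solution x(t) of ẋ = Ax. -/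
/-!
`V` is positive definite because `D` is invertible. Along a solution, `d/dt V(x) = xᵀ D² A x`,
and with `A = ω₀ B` the form `-2 xᵀ D² B x` is the sum of squares
`(x₀ + α²x₂ - α²x₁)² + (α²x₂ - x₀ - α⁴x₃)² + (2 - α²)(α²x₁² + α⁶x₃²)`,
which vanishes only at `x = 0` as long as `α² < 2`.
-/

open Matrix

section Calculus

variable {𝕜 : Type*} [NontriviallyNormedField 𝕜] {m n : Type*} [Fintype n]
  {f g : 𝕜 → n → 𝕜} {f' g' : n → 𝕜} {t : 𝕜}

theorem HasDerivAt.dotProduct (hf : HasDerivAt f f' t) (hg : HasDerivAt g g' t) :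
    HasDerivAt (fun s => f s ⬝ᵥ g s) (f' ⬝ᵥ g t + f t ⬝ᵥ g') t := by
  have := HasDerivAt.fun_sum (u := Finset.univ) fun i _ =>
    (hasDerivAt_pi.1 hf i).fun_mul (hasDerivAt_pi.1 hg i)
  simpa only [_root_.dotProduct, Finset.sum_add_distrib] using this

theorem HasDerivAt.mulVec (M : Matrix m n 𝕜) (hf : HasDerivAt f f' t) :
    HasDerivAt (fun s => M *ᵥ f s) (M *ᵥ f') t :=
  hasDerivAt_pi.2 fun i => by
    simpa only [zero_dotProduct, zero_add, Matrix.mulVec] using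
      (hasDerivAt_const t (M i)).dotProduct hf

theorem HasDerivAt.dotProduct_mulVec_self {M : Matrix n n 𝕜} (hM : M.IsSymm)
    (hf : HasDerivAt f f' t) :
    HasDerivAt (fun s => f s ⬝ᵥ M *ᵥ f s) (2 * (f t ⬝ᵥ M *ᵥ f')) t := by
  convert hf.dotProduct (hf.mulVec M) using 1
  rw [two_mul, dotProduct_mulVec, dotProduct_comm, ← mulVec_transpose, hM.eq]

end Calculus

theorem isSymm_diagonal_pow {n R : Type*} [Fintype n] [DecidableEq n] [CommSemiring R]
    (d : n → R) (k : ℕ) : (diagonal d ^ k).IsSymm := by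
  rw [diagonal_pow]
  exact isSymm_diagonal _

theorem posDef_diagonal_sq {n : Type*} [Fintype n] [DecidableEq n] {d : n → ℝ}
    (hd : ∀ i, d i ≠ 0) : (diagonal d ^ 2).PosDef := by
  rw [diagonal_pow, posDef_diagonal_iff]
  exact fun i => sq_pos_of_ne_zero (hd i)

def moogMatrix (α : ℝ) : Matrix (Fin 4) (Fin 4) ℝ :=
  !![-1, 0, 0, -α ^ 4;
     1, -1, 0, 0;
     0, 1, -1, 0;
     0, 0, 1, -1]

section Moog

variable {α : ℝ}

theorem moog_diag_ne_zero (hα : α ≠ 0) (i : Fin 4) : ![1, α, α ^ 2, α ^ 3] i ≠ 0 := by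
  fin_cases i <;> simp [hα]

theorem two_mul_dotProduct_diagonal_sq_mulVec_moogMatrix (v : Fin 4 → ℝ) :
    2 * (v ⬝ᵥ (diagonal ![1, α, α ^ 2, α ^ 3] ^ 2 *ᵥ (moogMatrix α *ᵥ v))) =
      -((v 0 + α ^ 2 * v 2 - α ^ 2 * v 1) ^ 2 + (α ^ 2 * v 2 - v 0 - α ^ 4 * v 3) ^ 2
        + (2 - α ^ 2) * α ^ 2 * v 1 ^ 2 + (2 - α ^ 2) * α ^ 6 * v 3 ^ 2) := by
  simp only [moogMatrix, diagonal_pow, dotProduct, mulVec, Fin.sum_univ_four, of_apply,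
    cons_val', cons_val_fin_one, cons_val_zero, cons_val_one, cons_val, Pi.pow_apply,
    diagonal_apply_eq, diagonal_apply_ne, ne_eq, Fin.reduceEq, not_false_eq_true]
  ring

theorem moog_sum_sq_pos (hα : 0 < α) (hα2 : α ^ 2 < 2) {v : Fin 4 → ℝ} (hv : v ≠ 0) :
    0 < (v 0 + α ^ 2 * v 2 - α ^ 2 * v 1) ^ 2 + (α ^ 2 * v 2 - v 0 - α ^ 4 * v 3) ^ 2
        + (2 - α ^ 2) * α ^ 2 * v 1 ^ 2 + (2 - α ^ 2) * α ^ 6 * v 3 ^ 2 := by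
  have hc : 0 < 2 - α ^ 2 := sub_pos.2 hα2
  have h₀ : 0 ≤ (v 0 + α ^ 2 * v 2 - α ^ 2 * v 1) ^ 2 := sq_nonneg _
  have h₂ : 0 ≤ (α ^ 2 * v 2 - v 0 - α ^ 4 * v 3) ^ 2 := sq_nonneg _
  have h₁ : 0 ≤ (2 - α ^ 2) * α ^ 2 * v 1 ^ 2 := by positivity
  have h₃ : 0 ≤ (2 - α ^ 2) * α ^ 6 * v 3 ^ 2 := by positivity
  by_contra! hS
  have hv1 : v 1 = 0 := by
    have : (2 - α ^ 2) * α ^ 2 * v 1 ^ 2 = 0 := by linarith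
    simpa [hc.ne', hα.ne'] using this
  have hv3 : v 3 = 0 := by
    have : (2 - α ^ 2) * α ^ 6 * v 3 ^ 2 = 0 := by linarith
    simpa [hc.ne', hα.ne'] using this
  have hsum : v 0 + α ^ 2 * v 2 = 0 := by
    have : (v 0 + α ^ 2 * v 2 - α ^ 2 * v 1) ^ 2 = 0 := by linarith
    simpa [hv1] using this
  have hdiff : α ^ 2 * v 2 - v 0 = 0 := by
    have : (α ^ 2 * v 2 - v 0 - α ^ 4 * v 3) ^ 2 = 0 := by linarith
    simpa [hv3] using this
  have hv0 : v 0 = 0 := by linarith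
  have hv2 : v 2 = 0 := by
    have : α ^ 2 * v 2 = 0 := by linarith
    simpa [hα.ne'] using this
  exact hv (funext fun i => by fin_cases i <;> assumption)

theorem dotProduct_diagonal_sq_mulVec_moogMatrix_neg (hα : 0 < α) (hα2 : α ^ 2 < 2)
    {v : Fin 4 → ℝ} (hv : v ≠ 0) :
    v ⬝ᵥ (diagonal ![1, α, α ^ 2, α ^ 3] ^ 2 *ᵥ (moogMatrix α *ᵥ v)) < 0 := by
  linarith [two_mul_dotProduct_diagonal_sq_mulVec_moogMatrix (α := α) v,
    moog_sum_sq_pos hα hα2 hv]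

end Moog

theorem linear_moog_lyapunov (ω₀ α : ℝ) (hω : 0 < ω₀) (hα : 0 < α)
    (hα2 : α < Real.sqrt 2)
    (x : ℝ → Fin 4 → ℝ)
    (hx : ∀ t, HasDerivAt x
      ((ω₀ • !![(-1 : ℝ), 0, 0, -α^4;
                1, -1, 0, 0;
                0, 1, -1, 0;
                0, 0, 1, -1]) *ᵥ x t) t) :
    (∀ v : Fin 4 → ℝ, v ≠ 0 →
      0 < (1/2 : ℝ) * (v ⬝ᵥ ((Matrix.diagonal ![1, α, α^2, α^3] ^ 2) *ᵥ v)))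
    ∧ ∀ t, x t ≠ 0 →
      deriv (fun s => (1/2 : ℝ) *
        (x s ⬝ᵥ ((Matrix.diagonal ![1, α, α^2, α^3] ^ 2) *ᵥ x s))) t < 0 := by
  have hα2' : α ^ 2 < 2 := (Real.lt_sqrt hα.le).1 hα2
  have hD : (diagonal ![1, α, α ^ 2, α ^ 3] ^ 2).PosDef :=
    posDef_diagonal_sq (moog_diag_ne_zero hα.ne')
  refine ⟨fun v hv => mul_pos one_half_pos ?_, fun t hxt => ?_⟩
  · simpa only [star_trivial] using hD.dotProduct_mulVec_pos hv
  · have hV := ((hx t).dotProduct_mulVec_self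
      (isSymm_diagonal_pow ![1, α, α ^ 2, α ^ 3] 2)).const_mul (1 / 2 : ℝ)
    refine hV.deriv.trans_lt ?_
    simp only [smul_mulVec, mulVec_smul, dotProduct_smul, smul_eq_mul, one_div, ← mul_assoc,
      inv_mul_cancel₀ (two_ne_zero (α := ℝ)), one_mul]
    exact mul_neg_of_pos_of_neg hω (dotProduct_diagonal_sq_mulVec_moogMatrix_neg hα hα2' hxt)
end

section
/- Let 0 < α ≤ 1, ω₀ > 0, and let w : ℝ → ℝ⁴ be a differentiable solution of the nonlinear Moog VCF system ẇ₁ = ω₀(-tanh(w₁) - tanh(α⁴w₄)), ẇ₂ = ω₀(-tanh(w₂) + tanh(w₁)), ẇ₃ = ω₀(-tanh(w₃) + tanh(w₂)), ẇ₄ = ω₀(-tanh(w₄) + tanh(w₃)). Then V(w) = ln(cosh(w₁)) + ln(cosh(w₂)) + ln(cosh(w₃)) + (1/α⁴)·ln(cosh(α⁴w₄)) satisfies d/dt V(w(t)) ≤ 0 for all t, with strict inequality whenever w(t) ≠ 0. -/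
/-!
Along a solution, `V` has derivative `ω₀ Q` with `Q = a(-a-d) + b(a-b) + c(b-c) + d(c-e)`, where
`a, b, c = tanh w₁, tanh w₂, tanh w₃`, `d = tanh (α⁴ w₄)` and `e = tanh w₄`. Completing squares,
`-Q = ½((a-b)² + (b-c)² + (c-d)² + (a+d)²) + d(e-d)`; the last term is nonnegative because `tanh` is
odd and increasing and `|α⁴ w₄| ≤ |w₄|`, and the sum of squares is a positive definite form in
`(a, b, c, d)`. Since `tanh` vanishes only at `0`, `Q < 0` as soon as `w ≠ 0`.
-/
open Real

namespace Real

theorem tanh_le_tanh_iff {x y : ℝ} : tanh x ≤ tanh y ↔ x ≤ y := by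
  rw [← artanh_le_artanh_iff ⟨neg_one_lt_tanh x, tanh_lt_one x⟩ ⟨neg_one_lt_tanh y, tanh_lt_one y⟩,
    artanh_tanh, artanh_tanh]

theorem tanh_eq_zero_iff {x : ℝ} : tanh x = 0 ↔ x = 0 :=
  tanh_injective.eq_iff' tanh_zero

theorem tanh_nonneg_iff {x : ℝ} : 0 ≤ tanh x ↔ 0 ≤ x := by
  simpa using tanh_le_tanh_iff (x := 0) (y := x)

theorem tanh_nonpos_iff {x : ℝ} : tanh x ≤ 0 ↔ x ≤ 0 := by
  simpa using tanh_le_tanh_iff (x := x) (y := 0)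

theorem tanh_mul_mul_tanh_sub_nonneg {k : ℝ} (hk₀ : 0 ≤ k) (hk₁ : k ≤ 1) (x : ℝ) :
    0 ≤ tanh (k * x) * (tanh x - tanh (k * x)) := by
  rcases le_total 0 x with hx | hx
  · exact mul_nonneg (tanh_nonneg_iff.2 (mul_nonneg hk₀ hx))
      (sub_nonneg.2 (tanh_le_tanh_iff.2 (mul_le_of_le_one_left hx hk₁)))
  · exact mul_nonneg_of_nonpos_of_nonpos (tanh_nonpos_iff.2 (mul_nonpos_of_nonneg_of_nonpos hk₀ hx))
      (sub_nonpos.2 (tanh_le_tanh_iff.2 (le_mul_of_le_one_left hx hk₁)))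

end Real

theorem HasDerivAt.log_cosh {f : ℝ → ℝ} {f' x : ℝ} (hf : HasDerivAt f f' x) :
    HasDerivAt (fun s => Real.log (Real.cosh (f s))) (tanh (f x) * f') x :=
  (hf.cosh.log (cosh_pos _).ne').congr_deriv <| by rw [tanh_eq_sinh_div_cosh]; ring

theorem HasDerivAt.inv_mul_log_cosh_const_mul {f : ℝ → ℝ} {f' x : ℝ} (hf : HasDerivAt f f' x)
    {k : ℝ} (hk : k ≠ 0) :
    HasDerivAt (fun s => 1 / k * Real.log (Real.cosh (k * f s))) (tanh (k * f x) * f') x :=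
  (((hf.const_mul k).log_cosh).const_mul (1 / k)).congr_deriv <| by field_simp

-- The left side is `-(½((a-b)² + (b-c)² + (c-d)² + (a+d)²) + d(e-d))`, and the quadratic form
-- `(a-b)² + (b-c)² + (c-d)² + (a+d)²` has least eigenvalue `2 - √2 > 1/4`.
theorem moog_dissipation_le (a b c d e : ℝ) (hde : 0 ≤ d * (e - d)) :
    a * (-a - d) + b * (-b + a) + c * (-c + b) + d * (-e + c) ≤ -(a^2 + b^2 + c^2 + d^2) / 8 := by
  nlinarith [sq_nonneg (a - b), sq_nonneg (b - c), sq_nonneg (c - d), sq_nonneg (a + d),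
    sq_nonneg (a + b), sq_nonneg (b + c), sq_nonneg (c + d), sq_nonneg (a - d)]

theorem sum_sq_tanh_pos {v : Fin 4 → ℝ} (hv : v ≠ 0) {k : ℝ} (hk : k ≠ 0) :
    0 < tanh (v 0) ^ 2 + tanh (v 1) ^ 2 + tanh (v 2) ^ 2 + tanh (k * v 3) ^ 2 := by
  have sq_tanh_pos {x : ℝ} (hx : x ≠ 0) : 0 < tanh x ^ 2 := by
    have := tanh_eq_zero_iff.not.2 hx
    positivity
  have := sq_nonneg (tanh (v 0))
  have := sq_nonneg (tanh (v 1))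
  have := sq_nonneg (tanh (v 2))
  have := sq_nonneg (tanh (k * v 3))
  obtain ⟨i, hi⟩ := Function.ne_iff.1 hv
  fin_cases i
  · linarith [sq_tanh_pos (show v 0 ≠ 0 from hi)]
  · linarith [sq_tanh_pos (show v 1 ≠ 0 from hi)]
  · linarith [sq_tanh_pos (show v 2 ≠ 0 from hi)]
  · linarith [sq_tanh_pos (mul_ne_zero hk (show v 3 ≠ 0 from hi))]

theorem moog_lyapunov_decrease_case_I (ω₀ α : ℝ) (hω : 0 < ω₀)
    (hα : 0 < α) (hα1 : α ≤ 1)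
    (w : ℝ → Fin 4 → ℝ)
    (h1 : ∀ t, HasDerivAt (fun s => w s 0)
      (ω₀ * (-Real.tanh (w t 0) - Real.tanh (α^4 * w t 3))) t)
    (h2 : ∀ t, HasDerivAt (fun s => w s 1)
      (ω₀ * (-Real.tanh (w t 1) + Real.tanh (w t 0))) t)
    (h3 : ∀ t, HasDerivAt (fun s => w s 2)
      (ω₀ * (-Real.tanh (w t 2) + Real.tanh (w t 1))) t)
    (h4 : ∀ t, HasDerivAt (fun s => w s 3)
      (ω₀ * (-Real.tanh (w t 3) + Real.tanh (w t 2))) t) :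
    ∀ t, deriv (fun s =>
        Real.log (Real.cosh (w s 0)) + Real.log (Real.cosh (w s 1))
        + Real.log (Real.cosh (w s 2))
        + (1/α^4) * Real.log (Real.cosh (α^4 * w s 3))) t ≤ 0
      ∧ (w t ≠ 0 → deriv (fun s =>
        Real.log (Real.cosh (w s 0)) + Real.log (Real.cosh (w s 1))
        + Real.log (Real.cosh (w s 2))
        + (1/α^4) * Real.log (Real.cosh (α^4 * w s 3))) t < 0) := by
  intro t
  have hk₀ : 0 < α ^ 4 := by positivity
  have hk₁ : α ^ 4 ≤ 1 := pow_le_one₀ hα.le hα1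
  have hV := (((h1 t).log_cosh.add (h2 t).log_cosh).add (h3 t).log_cosh).add
    ((h4 t).inv_mul_log_cosh_const_mul hk₀.ne')
  have hform := moog_dissipation_le (tanh (w t 0)) (tanh (w t 1)) (tanh (w t 2)) (tanh (α ^ 4 * w t 3))
    (tanh (w t 3)) (tanh_mul_mul_tanh_sub_nonneg hk₀.le hk₁ _)
  have hbound := calc
    deriv _ t = ω₀ * _ := hV.deriv.trans (by ring)
    _ ≤ ω₀ * _ := mul_le_mul_of_nonneg_left hform hω.le
  exact ⟨hbound.trans (by nlinarith),
    fun hw => hbound.trans_lt (by nlinarith [sum_sq_tanh_pos hw hk₀.ne'])⟩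
end
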